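/- arXiv:2208.02040 — 2 statements merged into one kernel-verified Lean document; each statement's English description precedes it below -/
import Mathlib

section
/- Let v, w be two distinct vectors in ℤ² each satisfying: either (gcd of the two components equals 1 and the first component is positive) or the vector equals (0,1). Suppose |v| < R and |w| < R. If x ∈ ℤ² satisfies |x·v| < A and |x·w| < A, then |x| < 2AR. -/
/-- Euclidean norm of a vector in `ℤ²`. -/
noncomputable def enorm2 (v : ℤ × ℤ) : ℝ := Real.sqrt ((v.1 : ℝ)^2 + (v.2 : ℝ)^2)

/-- Dot product on `ℤ²`. -/
def zdot (x v : ℤ × ℤ) : ℤ := x.1 * v.1 + x.2 * v.2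

/-- A generator: coprime components with positive first component, or `(0,1)`. -/
def IsGenerator (v : ℤ × ℤ) : Prop := (Int.gcd v.1 v.2 = 1 ∧ 0 < v.1) ∨ v = (0, 1)

lemma det_ne_zero (v w : ℤ × ℤ) (hv : IsGenerator v) (hw : IsGenerator w) (hvw : v ≠ w) :
    v.1 * w.2 - v.2 * w.1 ≠ 0 := by
  intro h
  rw [sub_eq_zero] at h
  rcases hv with ⟨hg, hp⟩ | hv
  · rcases hw with ⟨hg', hp'⟩ | hw
    · have hco : IsCoprime v.1 v.2 := Int.isCoprime_iff_gcd_eq_one.2 hg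
      have hco' : IsCoprime w.1 w.2 := Int.isCoprime_iff_gcd_eq_one.2 hg'
      have h1 : v.1 ∣ w.1 := by
        have : v.1 ∣ v.2 * w.1 := ⟨w.2, by linarith [h]⟩
        exact hco.dvd_of_dvd_mul_left this
      have h2 : w.1 ∣ v.1 := by
        have : w.1 ∣ w.2 * v.1 := ⟨v.2, by linarith [h]⟩
        exact hco'.dvd_of_dvd_mul_left this
      have he : v.1 = w.1 := Int.dvd_antisymm hp.le hp'.le h1 h2
      have he2 : v.2 = w.2 := by
        have := h
        rw [he] at this
        exact (mul_left_cancel₀ (by omega : w.1 ≠ 0) (by linarith [this])).symm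
      exact hvw (Prod.ext he (he2))
    · rw [hw] at h
      simp at h
      omega
  · rcases hw with ⟨hg', hp'⟩ | hw
    · rw [hv] at h
      simp at h
      omega
    · exact hvw (hv.trans hw.symm)

lemma minkowski2 (a b c d : ℝ) (ha : 0 ≤ a) (hb : 0 ≤ b) (hc : 0 ≤ c) (hd : 0 ≤ d) :
    (a + c)^2 + (b + d)^2 ≤ (Real.sqrt (a^2 + b^2) + Real.sqrt (c^2 + d^2))^2 := by
  have h1 : Real.sqrt (a^2+b^2)^2 = a^2+b^2 := Real.sq_sqrt (by positivity)
  have h2 : Real.sqrt (c^2+d^2)^2 = c^2+d^2 := Real.sq_sqrt (by positivity)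
  have h3 : (Real.sqrt (a^2+b^2) * Real.sqrt (c^2+d^2))^2 = (a^2+b^2)*(c^2+d^2) := by
    rw [mul_pow, h1, h2]
  have hcs : a*c + b*d ≤ Real.sqrt (a^2+b^2) * Real.sqrt (c^2+d^2) := by
    nlinarith [sq_nonneg (a*d - b*c), h3,
      mul_nonneg (Real.sqrt_nonneg (a^2+b^2)) (Real.sqrt_nonneg (c^2+d^2))]
  nlinarith

/-- Cramer-rule lemma: if `v ≠ w` are generators of norm `< R` and
`|x·v|, |x·w| < A`, then `|x| < 2 A R`. -/
theorem stmt0 (v w x : ℤ × ℤ) (A R : ℝ)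
    (hv : IsGenerator v) (hw : IsGenerator w) (hvw : v ≠ w)
    (hvR : enorm2 v < R) (hwR : enorm2 w < R)
    (hxv : (|zdot x v| : ℝ) < A) (hxw : (|zdot x w| : ℝ) < A) :
    enorm2 x < 2 * A * R := by
  set d : ℤ := v.1 * w.2 - v.2 * w.1 with hd
  have hdne := det_ne_zero v w hv hw hvw
  have hd1 : (1 : ℤ) ≤ |d| := Int.one_le_abs (by exact hdne)
  have hA : 0 < A := lt_of_le_of_lt (by positivity) hxv
  -- Cramer's rule identities
  have hx1 : x.1 * d = zdot x v * w.2 - zdot x w * v.2 := by simp [zdot, hd]; ring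
  have hx2 : x.2 * d = zdot x w * v.1 - zdot x v * w.1 := by simp [zdot, hd]; ring
  -- real bounds
  have hb1 : (|x.1| : ℝ) ≤ A * (|(v.2:ℝ)| + |(w.2:ℝ)|) := by
    have : (|x.1| : ℝ) ≤ (|x.1 * d| : ℤ) := by
      push_cast
      rw [abs_mul]
      nlinarith [abs_nonneg ((x.1:ℝ)), (by exact_mod_cast hd1 : (1:ℝ) ≤ |(d:ℝ)|)]
    refine this.trans ?_
    rw [hx1]
    push_cast
    calc |(zdot x v : ℝ) * w.2 - (zdot x w : ℝ) * v.2|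
        ≤ |(zdot x v : ℝ)| * |(w.2:ℝ)| + |(zdot x w : ℝ)| * |(v.2:ℝ)| := by
          rw [← abs_mul, ← abs_mul]; exact abs_sub _ _
      _ ≤ A * |(w.2:ℝ)| + A * |(v.2:ℝ)| := by
          nlinarith [hxv.le, hxw.le, abs_nonneg ((w.2:ℝ)), abs_nonneg ((v.2:ℝ)),
            abs_nonneg ((zdot x v:ℝ)), abs_nonneg ((zdot x w:ℝ))]
      _ = A * (|(v.2:ℝ)| + |(w.2:ℝ)|) := by ring
  have hb2 : (|x.2| : ℝ) ≤ A * (|(v.1:ℝ)| + |(w.1:ℝ)|) := by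
    have : (|x.2| : ℝ) ≤ (|x.2 * d| : ℤ) := by
      push_cast
      rw [abs_mul]
      nlinarith [abs_nonneg ((x.2:ℝ)), (by exact_mod_cast hd1 : (1:ℝ) ≤ |(d:ℝ)|)]
    refine this.trans ?_
    rw [hx2]
    push_cast
    calc |(zdot x w : ℝ) * v.1 - (zdot x v : ℝ) * w.1|
        ≤ |(zdot x w : ℝ)| * |(v.1:ℝ)| + |(zdot x v : ℝ)| * |(w.1:ℝ)| := by
          rw [← abs_mul, ← abs_mul]; exact abs_sub _ _
      _ ≤ A * |(v.1:ℝ)| + A * |(w.1:ℝ)| := by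
          nlinarith [hxv.le, hxw.le, abs_nonneg ((v.1:ℝ)), abs_nonneg ((w.1:ℝ)),
            abs_nonneg ((zdot x v:ℝ)), abs_nonneg ((zdot x w:ℝ))]
      _ = A * (|(v.1:ℝ)| + |(w.1:ℝ)|) := by ring
  -- Minkowski bound
  have hmink := minkowski2 |(v.2:ℝ)| |(v.1:ℝ)| |(w.2:ℝ)| |(w.1:ℝ)|
    (abs_nonneg _) (abs_nonneg _) (abs_nonneg _) (abs_nonneg _)
  have hev : Real.sqrt (|(v.2:ℝ)|^2 + |(v.1:ℝ)|^2) = enorm2 v := by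
    rw [enorm2]; rw [sq_abs, sq_abs]; rw [add_comm]
  have hew : Real.sqrt (|(w.2:ℝ)|^2 + |(w.1:ℝ)|^2) = enorm2 w := by
    rw [enorm2]; rw [sq_abs, sq_abs]; rw [add_comm]
  rw [hev, hew] at hmink
  have key : enorm2 x ≤ A * (enorm2 v + enorm2 w) := by
    rw [enorm2]
    have h0 : (0:ℝ) ≤ A * (enorm2 v + enorm2 w) := by
      have : 0 ≤ enorm2 v := Real.sqrt_nonneg _
      have : 0 ≤ enorm2 w := Real.sqrt_nonneg _
      positivity
    rw [show A * (enorm2 v + enorm2 w) = Real.sqrt ((A * (enorm2 v + enorm2 w))^2) by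
      rw [Real.sqrt_sq h0]]
    apply Real.sqrt_le_sqrt
    have e1 : ((x.1:ℝ))^2 ≤ (A * (|(v.2:ℝ)| + |(w.2:ℝ)|))^2 := by
      rw [← sq_abs]
      apply sq_le_sq' _ _
      · nlinarith [abs_nonneg ((x.1:ℝ)), (by push_cast; exact hb1 : |(x.1:ℝ)| ≤ A * (|(v.2:ℝ)| + |(w.2:ℝ)|))]
      · push_cast at hb1 ⊢; exact hb1
    have e2 : ((x.2:ℝ))^2 ≤ (A * (|(v.1:ℝ)| + |(w.1:ℝ)|))^2 := by
      rw [← sq_abs]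
      apply sq_le_sq' _ _
      · nlinarith [abs_nonneg ((x.2:ℝ)), (by push_cast; exact hb2 : |(x.2:ℝ)| ≤ A * (|(v.1:ℝ)| + |(w.1:ℝ)|))]
      · push_cast at hb2 ⊢; exact hb2
    nlinarith [hmink, sq_nonneg A]
  have hfin : A * (enorm2 v + enorm2 w) < 2 * A * R := by
    have := add_lt_add hvR hwR
    nlinarith
  exact lt_of_le_of_lt key hfin
end

section
/- Fix 0 < δ < 1/4 and μ = 1−2δ, c > 0. There exists j_min > 0 (one may take j_min = 2^{1/(2δ)}) such that for all j ∈ ℤ² with ⟨j⟩ ≥ j_min and all ℓ with |ℓ| < c⟨j⟩^δ: if w is the generator parallel to π(ℓ) ≠ 0 (so |w| ≤ |π(ℓ)| < ⟨j⟩^δ) and w ≠ v(j), then |j·π(ℓ)| > ⟨j⟩^μ. -/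
noncomputable def dnorm {d : ℕ} (ℓ : Fin d → ℤ) : ℝ := Real.sqrt (∑ i, ((ℓ i : ℝ))^2)

/-- The linear map `π : ℤ^d → ℤ²`, `π(ℓ) = Σᵢ ℓᵢ k⁽ⁱ⁾`. -/
def pimap {d : ℕ} (kk : Fin d → ℤ × ℤ) (ℓ : Fin d → ℤ) : ℤ × ℤ :=
  (∑ i, ℓ i * (kk i).1, ∑ i, ℓ i * (kk i).2)

/-- `v` attains the minimum of `|w·j|` over generators `w` with `|w| ≤ ⟨j⟩^δ`. -/
def IsMinimizer' (δ : ℝ) (j v : ℤ × ℤ) : Prop :=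
  IsGenerator v ∧ enorm2 v ≤ (1 + enorm2 j) ^ δ ∧
    ∀ w : ℤ × ℤ, IsGenerator w → enorm2 w ≤ (1 + enorm2 j) ^ δ → |zdot j v| ≤ |zdot j w|

lemma enorm2_nonneg' (v : ℤ × ℤ) : 0 ≤ enorm2 v := Real.sqrt_nonneg _

lemma abs_fst_le (v : ℤ × ℤ) : (|v.1| : ℝ) ≤ enorm2 v := by
  rw [enorm2, ← Real.sqrt_sq_eq_abs]
  exact Real.sqrt_le_sqrt (by nlinarith [sq_nonneg ((v.2 : ℝ))])

lemma abs_snd_le (v : ℤ × ℤ) : (|v.2| : ℝ) ≤ enorm2 v := by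
  rw [enorm2, ← Real.sqrt_sq_eq_abs]
  exact Real.sqrt_le_sqrt (by nlinarith [sq_nonneg ((v.1 : ℝ))])

lemma enorm2_le_abs_add (v : ℤ × ℤ) : enorm2 v ≤ (|v.1| : ℝ) + (|v.2| : ℝ) := by
  rw [enorm2]
  have h : ((v.1 : ℝ))^2 + ((v.2:ℝ))^2 ≤ ((|v.1| : ℝ) + (|v.2| : ℝ))^2 := by
    nlinarith [abs_nonneg ((v.1:ℝ)), abs_nonneg ((v.2:ℝ)), sq_abs ((v.1:ℝ)), sq_abs ((v.2:ℝ))]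
  calc Real.sqrt (((v.1 : ℝ))^2 + ((v.2:ℝ))^2) ≤ Real.sqrt (((|v.1| : ℝ) + (|v.2| : ℝ))^2) :=
        Real.sqrt_le_sqrt h
    _ = (|v.1| : ℝ) + (|v.2| : ℝ) := Real.sqrt_sq (by positivity)

lemma enorm2_le_smul (w : ℤ × ℤ) (n : ℤ) (hn : n ≠ 0) :
    enorm2 w ≤ enorm2 (n * w.1, n * w.2) := by
  have h1 : (1:ℝ) ≤ (n:ℝ)^2 := by
    have : (1:ℤ) ≤ n^2 := by nlinarith [sq_nonneg n, Int.one_le_abs hn, sq_abs n]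
    exact_mod_cast this
  apply Real.sqrt_le_sqrt
  push_cast
  nlinarith [sq_nonneg ((w.1:ℝ)), sq_nonneg ((w.2:ℝ))]

lemma gen_det {v w : ℤ × ℤ} (hv : IsGenerator v) (hw : IsGenerator w) (hne : v ≠ w) :
    v.1 * w.2 - v.2 * w.1 ≠ 0 := by
  intro hdet
  have heq : v.1 * w.2 = v.2 * w.1 := by linarith
  rcases hv with ⟨hvg, hvp⟩ | hv01
  · rcases hw with ⟨hwg, hwp⟩ | hw01
    · have h1 : v.1 ∣ w.1 :=
        (Int.isCoprime_iff_gcd_eq_one.mpr hvg).dvd_of_dvd_mul_left ⟨w.2, by linarith⟩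
      have h2 : w.1 ∣ v.1 :=
        (Int.isCoprime_iff_gcd_eq_one.mpr hwg).dvd_of_dvd_mul_left ⟨v.2, by linarith⟩
      have h3 : v.1 = w.1 := Int.dvd_antisymm hvp.le hwp.le h1 h2
      have h4 : v.2 = w.2 := by
        rw [h3] at heq
        have hw1 : w.1 ≠ 0 := by omega
        have := mul_left_cancel₀ hw1 (by linarith : w.1 * w.2 = w.1 * v.2)
        omega
      exact hne (Prod.ext h3 h4)
    · rw [hw01] at heq; simp at heq; omega
  · rcases hw with ⟨hwg, hwp⟩ | hw01
    · rw [hv01] at heq; simp at heq; omega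
    · exact hne (hv01.trans hw01.symm)

/-- For `⟨j⟩ ≥ j_min` and `|ℓ| < c⟨j⟩^δ`, if the generator `w` parallel to
`π(ℓ) ≠ 0` differs from `v(j)`, then `|j·π(ℓ)| > ⟨j⟩^μ`. -/
theorem stmt9 {d : ℕ} (kk : Fin d → ℤ × ℤ) (c δ μ : ℝ)
    (hc : 0 < c) (hδ : 0 < δ) (hδ' : δ < 1/4) (hμ : μ = 1 - 2*δ)
    (hπ : ∀ ℓ : Fin d → ℤ, c * enorm2 (pimap kk ℓ) ≤ dnorm ℓ) :
    ∃ jmin : ℝ, 0 < jmin ∧ ∀ (j : ℤ × ℤ) (ℓ : Fin d → ℤ) (vj w : ℤ × ℤ),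
      jmin ≤ 1 + enorm2 j → dnorm ℓ < c * (1 + enorm2 j) ^ δ →
      pimap kk ℓ ≠ 0 → IsMinimizer' δ j vj →
      IsGenerator w → (∃ n : ℤ, n ≠ 0 ∧ pimap kk ℓ = (n * w.1, n * w.2)) →
      w ≠ vj →
      (1 + enorm2 j) ^ μ < (|zdot j (pimap kk ℓ)| : ℝ) := by
  refine ⟨(5:ℝ) ^ (1/δ) + 1, by positivity, ?_⟩
  intro j ℓ vj w hjmin hℓ hπne hminz hwgen hpar hwv
  obtain ⟨n, hn, hπw⟩ := hpar
  set N := 1 + enorm2 j with hNdef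
  have hN1 : (1:ℝ) ≤ N := by have := enorm2_nonneg' j; simp [hNdef]; linarith
  have hN0 : (0:ℝ) < N := by linarith
  by_contra hcon
  push_neg at hcon
  -- |π(ℓ)| < N^δ
  have hπsmall : enorm2 (pimap kk ℓ) < N ^ δ := by
    have h1 := hπ ℓ
    have := lt_of_le_of_lt h1 hℓ
    exact lt_of_mul_lt_mul_left this hc.le
  -- |w| ≤ N^δ
  have hwnorm : enorm2 w ≤ N ^ δ := by
    have := enorm2_le_smul w n hn
    rw [← hπw] at this
    linarith
  -- zdot j π = n * zdot j w
  have hdotπ : zdot j (pimap kk ℓ) = n * zdot j w := by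
    rw [hπw]; simp only [zdot]; ring
  have hb_int : |zdot j w| ≤ |zdot j (pimap kk ℓ)| := by
    rw [hdotπ, abs_mul]
    exact le_mul_of_one_le_left (abs_nonneg _) (Int.one_le_abs hn)
  have hb : (|zdot j w| : ℝ) ≤ N ^ μ := le_trans (by exact_mod_cast hb_int) hcon
  obtain ⟨hvgen, hvnorm, hvmin⟩ := hminz
  have ha_int : |zdot j vj| ≤ |zdot j w| := hvmin w hwgen hwnorm
  have ha : (|zdot j vj| : ℝ) ≤ N ^ μ := le_trans (by exact_mod_cast ha_int) hb
  -- Cramer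
  set a := zdot j vj
  set b := zdot j w
  set det := vj.1 * w.2 - vj.2 * w.1 with hdetdef
  have hdet : det ≠ 0 := gen_det hvgen hwgen (Ne.symm hwv)
  have hdet1 : (1:ℤ) ≤ |det| := Int.one_le_abs hdet
  have hid1 : det * j.1 = w.2 * a - vj.2 * b := by simp only [hdetdef, zdot, a, b]; ring
  have hid2 : det * j.2 = vj.1 * b - w.1 * a := by simp only [hdetdef, zdot, a, b]; ring
  -- positivity facts
  have hPpos : (0:ℝ) < N ^ δ := Real.rpow_pos_of_pos hN0 _
  have hQnn : (0:ℝ) ≤ N ^ μ := (Real.rpow_pos_of_pos hN0 _).le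
  have key : ∀ x y : ℤ, (|x| : ℝ) ≤ N ^ δ → (|y| : ℝ) ≤ N ^ δ →
      ∀ z : ℤ, |det * z| = |x * a - y * b| → (|z| : ℝ) ≤ 2 * (N ^ δ * N ^ μ) := by
    intro x y hx hy z hz
    have h1 : |z| ≤ |det * z| := by
      rw [abs_mul]; exact le_mul_of_one_le_left (abs_nonneg _) hdet1
    have h2 : |x * a - y * b| ≤ |x| * |a| + |y| * |b| := by
      calc |x * a - y * b| ≤ |x * a| + |y * b| := abs_sub _ _
        _ = |x| * |a| + |y| * |b| := by rw [abs_mul, abs_mul]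
    have h3 : |z| ≤ |x| * |a| + |y| * |b| := by rw [hz] at h1; exact le_trans h1 h2
    have h3' : (|z| : ℝ) ≤ (|x| : ℝ) * (|a| : ℝ) + (|y| : ℝ) * (|b| : ℝ) := by
      exact_mod_cast h3
    have hxa : (|x| : ℝ) * (|a| : ℝ) ≤ N ^ δ * N ^ μ :=
      mul_le_mul hx ha (by positivity) hPpos.le
    have hyb : (|y| : ℝ) * (|b| : ℝ) ≤ N ^ δ * N ^ μ :=
      mul_le_mul hy hb (by positivity) hPpos.le
    linarith
  have hw2 : (|w.2| : ℝ) ≤ N ^ δ := le_trans (abs_snd_le w) hwnorm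
  have hw1 : (|w.1| : ℝ) ≤ N ^ δ := le_trans (abs_fst_le w) hwnorm
  have hv2 : (|vj.2| : ℝ) ≤ N ^ δ := le_trans (abs_snd_le vj) hvnorm
  have hv1 : (|vj.1| : ℝ) ≤ N ^ δ := le_trans (abs_fst_le vj) hvnorm
  have hj1 : (|j.1| : ℝ) ≤ 2 * (N ^ δ * N ^ μ) :=
    key w.2 vj.2 hw2 hv2 j.1 (by rw [hid1])
  have hj2 : (|j.2| : ℝ) ≤ 2 * (N ^ δ * N ^ μ) :=
    key w.1 vj.1 hw1 hv1 j.2 (by rw [hid2, abs_sub_comm])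
  -- combine
  have hrpow : N ^ δ * N ^ μ = N ^ (1 - δ) := by
    rw [← Real.rpow_add hN0]; congr 1; rw [hμ]; ring
  have hNle : N ≤ 1 + 4 * N ^ (1 - δ) := by
    have := enorm2_le_abs_add j
    simp only [hNdef]
    rw [← hrpow]
    linarith
  have hone : (1:ℝ) ≤ N ^ (1 - δ) := Real.one_le_rpow hN1 (by linarith)
  have hNsplit : N = N ^ δ * N ^ (1 - δ) := by
    rw [← Real.rpow_add hN0]
    norm_num
  have hfive : N ^ δ ≤ 5 := by
    have h5 : N ^ δ * N ^ (1 - δ) ≤ 5 * N ^ (1 - δ) := by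
      rw [← hNsplit]; linarith
    have hpos : (0:ℝ) < N ^ (1 - δ) := by linarith
    exact le_of_mul_le_mul_right h5 hpos
  have hNbound : N ≤ (5:ℝ) ^ (1/δ) := by
    have := Real.rpow_le_rpow hPpos.le hfive (by positivity : (0:ℝ) ≤ 1/δ)
    rwa [← Real.rpow_mul hN0.le, mul_one_div_cancel hδ.ne', Real.rpow_one] at this
  linarith
end
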